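/- Let R = F₁ × F₂ where F₁ = ⟨a,b⟩ and F₂ = ⟨c,d⟩ are both isomorphic to C₇ ⋊ C₃ = ⟨x,y | x⁷ = y³ = 1, y⁻¹xy = x²⟩, and let γ be the automorphism of R swapping a ↔ c, b ↔ d. Define S₁ = {a, a⁵, a⁶b, a⁶b²}, S₂ = {ab, (ab)⁻¹}, S₃ = {a³, b, ab², a⁴b²}, S₄ = {a²b, (a²b)⁻¹}, and S = (S₁∪S₁⁻¹)(S₃∪S₃⁻¹)^γ ∪ (S₃∪S₃⁻¹)(S₁∪S₁⁻¹)^γ ∪ S₁S₂^γ ∪ S₂S₁^γ ∪ S₁⁻¹S₄^γ ∪ S₄(S₁⁻¹)^γ. Then all six sets in this union are pairwise disjoint and |S| = 160. -/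
import Mathlib


open scoped Pointwise

/-- The factor-swapping automorphism `γ` of `F × F`. -/
def swapAut (F : Type*) [Group F] : F × F ≃* F × F := MulEquiv.prodComm

section

variable {F : Type*} [Group F]

/-- `S₁ = {a, a⁵, a⁶b, a⁶b²}`, viewed inside the first factor of `R = F × F`. -/
def S1 (a b : F) : Set (F × F) :=
  {(a, 1), (a ^ 5, 1), (a ^ 6 * b, 1), (a ^ 6 * b ^ 2, 1)}

/-- `S₂ = {ab, (ab)⁻¹}`, viewed inside the first factor of `R = F × F`. -/
def S2 (a b : F) : Set (F × F) := {(a * b, 1), ((a * b)⁻¹, 1)}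

/-- `S₃ = {a³, b, ab², a⁴b²}`, viewed inside the first factor of `R = F × F`. -/
def S3 (a b : F) : Set (F × F) :=
  {(a ^ 3, 1), (b, 1), (a * b ^ 2, 1), (a ^ 4 * b ^ 2, 1)}

/-- `S₄ = {a²b, (a²b)⁻¹}`, viewed inside the first factor of `R = F × F`. -/
def S4 (a b : F) : Set (F × F) := {(a ^ 2 * b, 1), ((a ^ 2 * b)⁻¹, 1)}

end

namespace Stmt17Aux

/-! ### A concrete model of `C₇ ⋊ C₃` -/

def G : Type := Fin 7 × Fin 3

instance : DecidableEq G := inferInstanceAs (DecidableEq (Fin 7 × Fin 3))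
instance : Fintype G := inferInstanceAs (Fintype (Fin 7 × Fin 3))

/-- `4 ^ j mod 7`. -/
def t : Fin 3 → Nat
  | ⟨0, _⟩ => 1
  | ⟨1, _⟩ => 4
  | ⟨2, _⟩ => 2

def gmul (x y : G) : G :=
  (⟨(x.1.val + t x.2 * y.1.val) % 7, Nat.mod_lt _ (Nat.zero_lt_succ _)⟩,
   ⟨(x.2.val + y.2.val) % 3, Nat.mod_lt _ (Nat.zero_lt_succ _)⟩)

/-- `4 ^ (-j) mod 7`. -/
def ti : Fin 3 → Nat
  | ⟨0, _⟩ => 1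
  | ⟨1, _⟩ => 2
  | ⟨2, _⟩ => 4

def ginv (x : G) : G :=
  (⟨(ti x.2 * (7 - x.1.val)) % 7, Nat.mod_lt _ (Nat.zero_lt_succ _)⟩,
   ⟨(3 - x.2.val) % 3, Nat.mod_lt _ (Nat.zero_lt_succ _)⟩)

set_option maxHeartbeats 2000000 in
instance : Group G where
  mul := gmul
  one := (⟨0, Nat.zero_lt_succ _⟩, ⟨0, Nat.zero_lt_succ _⟩)
  inv := ginv
  mul_assoc := by decide
  one_mul := by decide
  mul_one := by decide
  inv_mul_cancel := by decide

/-! ### The four generating sets inside `G` -/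

/-- Constructor for elements of `G`. -/
def mk (x : Fin 7) (y : Fin 3) : G := (x, y)

def E1 : Finset G :=
  {mk ⟨1, by omega⟩ ⟨0, by omega⟩, mk ⟨5, by omega⟩ ⟨0, by omega⟩,
   mk ⟨6, by omega⟩ ⟨1, by omega⟩, mk ⟨6, by omega⟩ ⟨2, by omega⟩}

def E2 : Finset G :=
  {mk ⟨1, by omega⟩ ⟨1, by omega⟩, (mk ⟨1, by omega⟩ ⟨1, by omega⟩)⁻¹}

def E3 : Finset G :=
  {mk ⟨3, by omega⟩ ⟨0, by omega⟩, mk ⟨0, by omega⟩ ⟨1, by omega⟩,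
   mk ⟨1, by omega⟩ ⟨2, by omega⟩, mk ⟨4, by omega⟩ ⟨2, by omega⟩}

def E4 : Finset G :=
  {mk ⟨2, by omega⟩ ⟨1, by omega⟩, (mk ⟨2, by omega⟩ ⟨1, by omega⟩)⁻¹}

/-! ### Relations in `F` -/

section Relations

variable {F : Type*} [Group F] {a b : F}

lemma ha7 (h7 : orderOf a = 7) : a ^ 7 = 1 := h7 ▸ pow_orderOf_eq_one a

lemma hb3 (h3 : orderOf b = 3) : b ^ 3 = 1 := h3 ▸ pow_orderOf_eq_one b

lemma hamod (h7 : orderOf a = 7) (m : ℕ) : a ^ (m % 7) = a ^ m := by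
  conv_rhs => rw [← Nat.div_add_mod m 7]
  rw [pow_add, pow_mul, ha7 h7, one_pow, one_mul]

lemma hbmod (h3 : orderOf b = 3) (n : ℕ) : b ^ (n % 3) = b ^ n := by
  conv_rhs => rw [← Nat.div_add_mod n 3]
  rw [pow_add, pow_mul, hb3 h3, one_pow, one_mul]

lemma hba (h7 : orderOf a = 7) (hab : b⁻¹ * a * b = a ^ 2) : b * a = a ^ 4 * b := by
  have c2 : (b * a * b⁻¹) ^ 2 = a := by
    rw [conj_pow, ← hab]; group
  have c7 : (b * a * b⁻¹) ^ 7 = 1 := by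
    rw [conj_pow, ha7 h7]; group
  have key : b * a * b⁻¹ = a ^ 4 := by
    have h8 : (b * a * b⁻¹) ^ 8 = a ^ 4 := by
      rw [show (8 : ℕ) = 2 * 4 from rfl, pow_mul, c2]
    calc b * a * b⁻¹ = (b * a * b⁻¹) ^ 8 * ((b * a * b⁻¹) ^ 7)⁻¹ := by group
    _ = a ^ 4 := by rw [c7, h8, inv_one, mul_one]
  calc b * a = (b * a * b⁻¹) * b := by group
  _ = a ^ 4 * b := by rw [key]

lemma hbak (h7 : orderOf a = 7) (hab : b⁻¹ * a * b = a ^ 2) (k : ℕ) :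
    b * a ^ k = a ^ (4 * k) * b := by
  induction k with
  | zero => simp
  | succ n ih =>
    calc b * a ^ (n + 1) = (b * a ^ n) * a := by rw [pow_succ, mul_assoc]
    _ = a ^ (4 * n) * (b * a) := by rw [ih, mul_assoc]
    _ = a ^ (4 * n) * (a ^ 4 * b) := by rw [hba h7 hab]
    _ = a ^ (4 * (n + 1)) * b := by
        rw [show 4 * (n + 1) = 4 * n + 4 from by ring, pow_add, mul_assoc]

lemma hbjak (h7 : orderOf a = 7) (hab : b⁻¹ * a * b = a ^ 2) (j k : ℕ) :
    b ^ j * a ^ k = a ^ (4 ^ j * k) * b ^ j := by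
  induction j generalizing k with
  | zero => simp
  | succ n ih =>
    calc b ^ (n + 1) * a ^ k = b ^ n * (b * a ^ k) := by rw [pow_succ, mul_assoc]
    _ = b ^ n * (a ^ (4 * k) * b) := by rw [hbak h7 hab]
    _ = (b ^ n * a ^ (4 * k)) * b := by rw [mul_assoc]
    _ = (a ^ (4 ^ n * (4 * k)) * b ^ n) * b := by rw [ih]
    _ = a ^ (4 ^ (n + 1) * k) * b ^ (n + 1) := by
        rw [show 4 ^ n * (4 * k) = 4 ^ (n + 1) * k from by ring, mul_assoc, ← pow_succ]

end Relations

section Psi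

variable {F : Type*} [Group F]

/-- The homomorphism from the concrete model to `F`. -/
def psiHom (a b : F) (h7 : orderOf a = 7) (h3 : orderOf b = 3)
    (hab : b⁻¹ * a * b = a ^ 2) : G →* F where
  toFun x := a ^ x.1.val * b ^ x.2.val
  map_one' := by
    show a ^ (0 : ℕ) * b ^ (0 : ℕ) = 1
    simp
  map_mul' x y := by
    show a ^ ((x.1.val + t x.2 * y.1.val) % 7) * b ^ ((x.2.val + y.2.val) % 3) = _
    rw [hamod h7, hbmod h3]
    have ht : ∀ (j : Fin 3) (k : ℕ), a ^ (t j * k) = a ^ (4 ^ j.val * k) := by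
      intro j k
      match j with
      | ⟨0, _⟩ => rfl
      | ⟨1, _⟩ => rfl
      | ⟨2, _⟩ =>
        show a ^ (2 * k) = a ^ (4 ^ 2 * k)
        have : a ^ (4 ^ 2 * k) = a ^ (2 * k) := by
          rw [show 4 ^ 2 * k = 7 * (2 * k) + 2 * k from by ring, pow_add, pow_mul,
            ha7 h7, one_pow, one_mul]
        exact this.symm
    calc a ^ (x.1.val + t x.2 * y.1.val) * b ^ (x.2.val + y.2.val)
        = a ^ x.1.val * a ^ (t x.2 * y.1.val) * (b ^ x.2.val * b ^ y.2.val) := by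
          rw [pow_add, pow_add]
    _ = a ^ x.1.val * a ^ (4 ^ x.2.val * y.1.val) * (b ^ x.2.val * b ^ y.2.val) := by
          rw [ht]
    _ = a ^ x.1.val * (a ^ (4 ^ x.2.val * y.1.val) * b ^ x.2.val) * b ^ y.2.val := by
          simp only [mul_assoc]
    _ = a ^ x.1.val * (b ^ x.2.val * a ^ y.1.val) * b ^ y.2.val := by
          rw [hbjak h7 hab]
    _ = a ^ x.1.val * b ^ x.2.val * (a ^ y.1.val * b ^ y.2.val) := by
          simp only [mul_assoc]

lemma psiHom_injective (a b : F) (h7 : orderOf a = 7) (h3 : orderOf b = 3)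
    (hab : b⁻¹ * a * b = a ^ 2) : Function.Injective (psiHom a b h7 h3 hab) := by
  intro x y h
  have hx1 : x.1.val < 7 := x.1.isLt
  have hx2 : x.2.val < 3 := x.2.isLt
  have hy1 : y.1.val < 7 := y.1.isLt
  have hy2 : y.2.val < 3 := y.2.isLt
  set m := x.1.val; set n := x.2.val; set p := y.1.val; set q := y.2.val
  have h' : a ^ m * b ^ n = a ^ p * b ^ q := h
  have hbn : b ^ n * b ^ (3 - n) = 1 := by
    rw [← pow_add, show n + (3 - n) = 3 from by omega, hb3 h3]
  have han : a ^ (7 - p) * a ^ p = 1 := by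
    rw [← pow_add, show 7 - p + p = 7 from by omega, ha7 h7]
  have key : a ^ (7 - p + m) = b ^ (q + (3 - n)) := by
    calc a ^ (7 - p + m) = a ^ (7 - p) * a ^ m := by rw [pow_add]
    _ = a ^ (7 - p) * (a ^ m * (b ^ n * b ^ (3 - n))) := by rw [hbn, mul_one]
    _ = a ^ (7 - p) * ((a ^ m * b ^ n) * b ^ (3 - n)) := by simp only [mul_assoc]
    _ = a ^ (7 - p) * ((a ^ p * b ^ q) * b ^ (3 - n)) := by rw [h']
    _ = (a ^ (7 - p) * a ^ p) * (b ^ q * b ^ (3 - n)) := by simp only [mul_assoc]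
    _ = b ^ (q + (3 - n)) := by rw [han, one_mul, ← pow_add]
  have e7 : (a ^ (7 - p + m)) ^ 7 = 1 := by
    rw [← pow_mul, mul_comm, pow_mul, ha7 h7, one_pow]
  have e3 : (a ^ (7 - p + m)) ^ 3 = 1 := by
    rw [key, ← pow_mul, mul_comm, pow_mul, hb3 h3, one_pow]
  have hone : a ^ (7 - p + m) = 1 := by
    have d1 : orderOf (a ^ (7 - p + m)) ∣ 7 := orderOf_dvd_of_pow_eq_one e7
    have d2 : orderOf (a ^ (7 - p + m)) ∣ 3 := orderOf_dvd_of_pow_eq_one e3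
    have : orderOf (a ^ (7 - p + m)) ∣ 1 := Nat.dvd_gcd d1 d2
    rw [Nat.dvd_one] at this
    exact orderOf_eq_one_iff.mp this
  have d7 : 7 ∣ 7 - p + m := by
    have hd := orderOf_dvd_of_pow_eq_one hone
    rwa [h7] at hd
  have d3 : 3 ∣ q + (3 - n) := by
    have hone' : b ^ (q + (3 - n)) = 1 := key ▸ hone
    have hd := orderOf_dvd_of_pow_eq_one hone'
    rwa [h3] at hd
  have hmp : m = p := by omega
  have hnq : n = q := by omega
  have : x.1 = y.1 := Fin.ext hmp
  have h2 : x.2 = y.2 := Fin.ext hnq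
  exact Prod.ext this h2

end Psi

end Stmt17Aux

/-- Let `R = F₁ × F₂` with `F₁ = ⟨a,b⟩ ≅ F₂ = ⟨c,d⟩ ≅ C₇ ⋊ C₃` (here `R = F × F` with
`a = (a,1)`, `b = (b,1)`, `c = (1,a)`, `d = (1,b)`), and let `γ` be the automorphism of `R`
swapping `a ↔ c` and `b ↔ d` (the factor-swapping automorphism). With `S₁, S₂, S₃, S₄` as
in the construction and
`S = (S₁∪S₁⁻¹)(S₃∪S₃⁻¹)^γ ∪ (S₃∪S₃⁻¹)(S₁∪S₁⁻¹)^γ ∪ S₁S₂^γ ∪ S₂S₁^γ ∪ S₁⁻¹S₄^γ ∪ S₄(S₁⁻¹)^γ`,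
the six sets in this union are pairwise disjoint and `|S| = 160`. -/
theorem stmt17 (F : Type*) [Group F] (a b : F)
    (h7 : orderOf a = 7) (h3 : orderOf b = 3) (hab : b⁻¹ * a * b = a ^ 2)
    (hgen : Subgroup.closure ({a, b} : Set F) = ⊤) :
    ([(S1 a b ∪ (S1 a b)⁻¹) * (⇑(swapAut F) '' (S3 a b ∪ (S3 a b)⁻¹)),
      (S3 a b ∪ (S3 a b)⁻¹) * (⇑(swapAut F) '' (S1 a b ∪ (S1 a b)⁻¹)),
      S1 a b * (⇑(swapAut F) '' S2 a b),
      S2 a b * (⇑(swapAut F) '' S1 a b),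
      (S1 a b)⁻¹ * (⇑(swapAut F) '' S4 a b),
      S4 a b * (⇑(swapAut F) '' (S1 a b)⁻¹)] :
        List (Set (F × F))).Pairwise Disjoint ∧
    ((S1 a b ∪ (S1 a b)⁻¹) * (⇑(swapAut F) '' (S3 a b ∪ (S3 a b)⁻¹)) ∪
      (S3 a b ∪ (S3 a b)⁻¹) * (⇑(swapAut F) '' (S1 a b ∪ (S1 a b)⁻¹)) ∪
      S1 a b * (⇑(swapAut F) '' S2 a b) ∪
      S2 a b * (⇑(swapAut F) '' S1 a b) ∪
      (S1 a b)⁻¹ * (⇑(swapAut F) '' S4 a b) ∪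
      S4 a b * (⇑(swapAut F) '' (S1 a b)⁻¹)).ncard = 160 := by
  classical
  set ψ : Stmt17Aux.G →* F := Stmt17Aux.psiHom a b h7 h3 hab with hψdef
  have hinj : Function.Injective ⇑ψ := Stmt17Aux.psiHom_injective a b h7 h3 hab
  -- commutation of the swap automorphism with products
  have hswap : ⇑(swapAut F) = (Prod.swap : F × F → F × F) := rfl
  -- generic pointwise lemmas for products of sets
  have prodmul : ∀ X Y X' Y' : Set F, (X ×ˢ Y) * (X' ×ˢ Y') = (X * X') ×ˢ (Y * Y') := by
    intro X Y X' Y'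
    ext ⟨u, v⟩
    constructor
    · rintro ⟨⟨p1, p2⟩, hp, ⟨q1, q2⟩, hq, heq⟩
      rw [Prod.ext_iff] at heq
      obtain ⟨h1, h2⟩ := heq
      exact ⟨⟨p1, hp.1, q1, hq.1, h1⟩, ⟨p2, hp.2, q2, hq.2, h2⟩⟩
    · rintro ⟨⟨p1, hp1, q1, hq1, h1⟩, ⟨p2, hp2, q2, hq2, h2⟩⟩
      exact ⟨(p1, p2), ⟨hp1, hp2⟩, (q1, q2), ⟨hq1, hq2⟩, Prod.ext h1 h2⟩
  have prodinv : ∀ X Y : Set F, (X ×ˢ Y)⁻¹ = X⁻¹ ×ˢ Y⁻¹ := by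
    intro X Y
    ext ⟨u, v⟩
    simp [Set.mem_inv, Set.mem_prod, Prod.inv_mk]
  have img_inv : ∀ E : Finset Stmt17Aux.G, (⇑ψ '' (↑E : Set Stmt17Aux.G))⁻¹ =
      ⇑ψ '' (↑(E⁻¹) : Set Stmt17Aux.G) := by
    intro E
    rw [Finset.coe_inv, ← Set.image_inv_eq_inv, ← Set.image_inv_eq_inv,
      Set.image_image, Set.image_image]
    simp [map_inv]
  have gamma_img : ∀ X : Set F, ⇑(swapAut F) '' (X ×ˢ (1 : Set F)) = (1 : Set F) ×ˢ X := by
    intro X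
    rw [hswap]
    exact Set.image_swap_prod X 1
  have mul_term : ∀ X Y : Set F, (X ×ˢ (1 : Set F)) * ((1 : Set F) ×ˢ Y) = X ×ˢ Y := by
    intro X Y
    rw [prodmul]
    simp
  have inv_term : ∀ E : Finset Stmt17Aux.G,
      ((⇑ψ '' (↑E : Set Stmt17Aux.G)) ×ˢ (1 : Set F))⁻¹ =
      (⇑ψ '' (↑(E⁻¹) : Set Stmt17Aux.G)) ×ˢ (1 : Set F) := by
    intro E
    rw [prodinv, img_inv]
    simp
  have union_term : ∀ E E' : Finset Stmt17Aux.G,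
      ((⇑ψ '' (↑E : Set Stmt17Aux.G)) ×ˢ (1 : Set F)) ∪
        ((⇑ψ '' (↑E' : Set Stmt17Aux.G)) ×ˢ (1 : Set F)) =
      (⇑ψ '' (↑(E ∪ E') : Set Stmt17Aux.G)) ×ˢ (1 : Set F) := by
    intro E E'
    rw [← Set.union_prod, ← Set.image_union, Finset.coe_union]
  -- evaluation of ψ on the generators
  have v1 : ψ (Stmt17Aux.mk ⟨1, by omega⟩ ⟨0, by omega⟩) = a := by
    show a ^ 1 * b ^ 0 = a; rw [pow_one, pow_zero, mul_one]
  have v2 : ψ (Stmt17Aux.mk ⟨5, by omega⟩ ⟨0, by omega⟩) = a ^ 5 := by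
    show a ^ 5 * b ^ 0 = a ^ 5; rw [pow_zero, mul_one]
  have v3 : ψ (Stmt17Aux.mk ⟨6, by omega⟩ ⟨1, by omega⟩) = a ^ 6 * b := by
    show a ^ 6 * b ^ 1 = a ^ 6 * b; rw [pow_one]
  have v4 : ψ (Stmt17Aux.mk ⟨6, by omega⟩ ⟨2, by omega⟩) = a ^ 6 * b ^ 2 := rfl
  have w1 : ψ (Stmt17Aux.mk ⟨3, by omega⟩ ⟨0, by omega⟩) = a ^ 3 := by
    show a ^ 3 * b ^ 0 = a ^ 3; rw [pow_zero, mul_one]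
  have w2 : ψ (Stmt17Aux.mk ⟨0, by omega⟩ ⟨1, by omega⟩) = b := by
    show a ^ 0 * b ^ 1 = b; rw [pow_zero, pow_one, one_mul]
  have w3 : ψ (Stmt17Aux.mk ⟨1, by omega⟩ ⟨2, by omega⟩) = a * b ^ 2 := by
    show a ^ 1 * b ^ 2 = a * b ^ 2; rw [pow_one]
  have w4 : ψ (Stmt17Aux.mk ⟨4, by omega⟩ ⟨2, by omega⟩) = a ^ 4 * b ^ 2 := rfl
  have u1 : ψ (Stmt17Aux.mk ⟨1, by omega⟩ ⟨1, by omega⟩) = a * b := by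
    show a ^ 1 * b ^ 1 = a * b; rw [pow_one, pow_one]
  have x1 : ψ (Stmt17Aux.mk ⟨2, by omega⟩ ⟨1, by omega⟩) = a ^ 2 * b := by
    show a ^ 2 * b ^ 1 = a ^ 2 * b; rw [pow_one]
  -- the base sets as images
  have base1 : S1 a b = (⇑ψ '' (↑Stmt17Aux.E1 : Set Stmt17Aux.G)) ×ˢ (1 : Set F) := by
    rw [← Set.singleton_one, Set.prod_singleton, Set.image_image]
    simp only [Stmt17Aux.E1, Finset.coe_insert, Finset.coe_singleton, Set.image_insert_eq,
      Set.image_singleton, v1, v2, v3, v4, S1]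
  have base2 : S2 a b = (⇑ψ '' (↑Stmt17Aux.E2 : Set Stmt17Aux.G)) ×ˢ (1 : Set F) := by
    rw [← Set.singleton_one, Set.prod_singleton, Set.image_image]
    simp only [Stmt17Aux.E2, Finset.coe_insert, Finset.coe_singleton, Set.image_insert_eq,
      Set.image_singleton, map_inv, u1, S2]
  have base3 : S3 a b = (⇑ψ '' (↑Stmt17Aux.E3 : Set Stmt17Aux.G)) ×ˢ (1 : Set F) := by
    rw [← Set.singleton_one, Set.prod_singleton, Set.image_image]
    simp only [Stmt17Aux.E3, Finset.coe_insert, Finset.coe_singleton, Set.image_insert_eq,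
      Set.image_singleton, w1, w2, w3, w4, S3]
  have base4 : S4 a b = (⇑ψ '' (↑Stmt17Aux.E4 : Set Stmt17Aux.G)) ×ˢ (1 : Set F) := by
    rw [← Set.singleton_one, Set.prod_singleton, Set.image_image]
    simp only [Stmt17Aux.E4, Finset.coe_insert, Finset.coe_singleton, Set.image_insert_eq,
      Set.image_singleton, map_inv, x1, S4]
  -- the six factors of the union
  have t1 : (S1 a b ∪ (S1 a b)⁻¹) * (⇑(swapAut F) '' (S3 a b ∪ (S3 a b)⁻¹)) = (⇑ψ '' ↑(Stmt17Aux.E1 ∪ Stmt17Aux.E1⁻¹)) ×ˢ (⇑ψ '' ↑(Stmt17Aux.E3 ∪ Stmt17Aux.E3⁻¹)) := by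
    rw [base1, base3, inv_term, inv_term, union_term, union_term, gamma_img, mul_term]
  have t2 : (S3 a b ∪ (S3 a b)⁻¹) * (⇑(swapAut F) '' (S1 a b ∪ (S1 a b)⁻¹)) = (⇑ψ '' ↑(Stmt17Aux.E3 ∪ Stmt17Aux.E3⁻¹)) ×ˢ (⇑ψ '' ↑(Stmt17Aux.E1 ∪ Stmt17Aux.E1⁻¹)) := by
    rw [base1, base3, inv_term, inv_term, union_term, union_term, gamma_img, mul_term]
  have t3 : S1 a b * (⇑(swapAut F) '' S2 a b) = (⇑ψ '' ↑(Stmt17Aux.E1)) ×ˢ (⇑ψ '' ↑(Stmt17Aux.E2)) := by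
    rw [base1, base2, gamma_img, mul_term]
  have t4 : S2 a b * (⇑(swapAut F) '' S1 a b) = (⇑ψ '' ↑(Stmt17Aux.E2)) ×ˢ (⇑ψ '' ↑(Stmt17Aux.E1)) := by
    rw [base1, base2, gamma_img, mul_term]
  have t5 : (S1 a b)⁻¹ * (⇑(swapAut F) '' S4 a b) = (⇑ψ '' ↑(Stmt17Aux.E1⁻¹)) ×ˢ (⇑ψ '' ↑(Stmt17Aux.E4)) := by
    rw [base1, base4, inv_term, gamma_img, mul_term]
  have t6 : S4 a b * (⇑(swapAut F) '' (S1 a b)⁻¹) = (⇑ψ '' ↑(Stmt17Aux.E4)) ×ˢ (⇑ψ '' ↑(Stmt17Aux.E1⁻¹)) := by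
    rw [base1, base4, inv_term, gamma_img, mul_term]
  -- disjointness and cardinality helpers
  have hdisj : ∀ A B C D : Finset Stmt17Aux.G, (A ∩ C = ∅ ∨ B ∩ D = ∅) →
      Disjoint ((⇑ψ '' (↑A : Set Stmt17Aux.G)) ×ˢ (⇑ψ '' (↑B : Set Stmt17Aux.G)))
        ((⇑ψ '' (↑C : Set Stmt17Aux.G)) ×ˢ (⇑ψ '' (↑D : Set Stmt17Aux.G))) := by
    intro A B C D h
    rw [Set.disjoint_prod]
    rcases h with h | h
    · exact Or.inl ((Set.disjoint_image_iff hinj).mpr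
        (Finset.disjoint_coe.mpr (Finset.disjoint_iff_inter_eq_empty.mpr h)))
    · exact Or.inr ((Set.disjoint_image_iff hinj).mpr
        (Finset.disjoint_coe.mpr (Finset.disjoint_iff_inter_eq_empty.mpr h)))
  have hcard : ∀ A B : Finset Stmt17Aux.G,
      ((⇑ψ '' (↑A : Set Stmt17Aux.G)) ×ˢ (⇑ψ '' (↑B : Set Stmt17Aux.G))).ncard =
        A.card * B.card := by
    intro A B
    rw [← Finset.coe_image, ← Finset.coe_image, ← Finset.coe_product, Set.ncard_coe_finset,
      Finset.card_product, Finset.card_image_of_injective _ hinj,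
      Finset.card_image_of_injective _ hinj]
  have hfin : ∀ A B : Finset Stmt17Aux.G,
      ((⇑ψ '' (↑A : Set Stmt17Aux.G)) ×ˢ (⇑ψ '' (↑B : Set Stmt17Aux.G))).Finite := by
    intro A B
    rw [← Finset.coe_image, ← Finset.coe_image, ← Finset.coe_product]
    exact Finset.finite_toSet _
  have d12 : Disjoint ((⇑ψ '' ↑(Stmt17Aux.E1 ∪ Stmt17Aux.E1⁻¹)) ×ˢ (⇑ψ '' ↑(Stmt17Aux.E3 ∪ Stmt17Aux.E3⁻¹))) ((⇑ψ '' ↑(Stmt17Aux.E3 ∪ Stmt17Aux.E3⁻¹)) ×ˢ (⇑ψ '' ↑(Stmt17Aux.E1 ∪ Stmt17Aux.E1⁻¹))) :=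
    hdisj _ _ _ _ (Or.inl (by decide))
  have d13 : Disjoint ((⇑ψ '' ↑(Stmt17Aux.E1 ∪ Stmt17Aux.E1⁻¹)) ×ˢ (⇑ψ '' ↑(Stmt17Aux.E3 ∪ Stmt17Aux.E3⁻¹))) ((⇑ψ '' ↑(Stmt17Aux.E1)) ×ˢ (⇑ψ '' ↑(Stmt17Aux.E2))) :=
    hdisj _ _ _ _ (Or.inr (by decide))
  have d14 : Disjoint ((⇑ψ '' ↑(Stmt17Aux.E1 ∪ Stmt17Aux.E1⁻¹)) ×ˢ (⇑ψ '' ↑(Stmt17Aux.E3 ∪ Stmt17Aux.E3⁻¹))) ((⇑ψ '' ↑(Stmt17Aux.E2)) ×ˢ (⇑ψ '' ↑(Stmt17Aux.E1))) :=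
    hdisj _ _ _ _ (Or.inl (by decide))
  have d15 : Disjoint ((⇑ψ '' ↑(Stmt17Aux.E1 ∪ Stmt17Aux.E1⁻¹)) ×ˢ (⇑ψ '' ↑(Stmt17Aux.E3 ∪ Stmt17Aux.E3⁻¹))) ((⇑ψ '' ↑(Stmt17Aux.E1⁻¹)) ×ˢ (⇑ψ '' ↑(Stmt17Aux.E4))) :=
    hdisj _ _ _ _ (Or.inr (by decide))
  have d16 : Disjoint ((⇑ψ '' ↑(Stmt17Aux.E1 ∪ Stmt17Aux.E1⁻¹)) ×ˢ (⇑ψ '' ↑(Stmt17Aux.E3 ∪ Stmt17Aux.E3⁻¹))) ((⇑ψ '' ↑(Stmt17Aux.E4)) ×ˢ (⇑ψ '' ↑(Stmt17Aux.E1⁻¹))) :=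
    hdisj _ _ _ _ (Or.inl (by decide))
  have d23 : Disjoint ((⇑ψ '' ↑(Stmt17Aux.E3 ∪ Stmt17Aux.E3⁻¹)) ×ˢ (⇑ψ '' ↑(Stmt17Aux.E1 ∪ Stmt17Aux.E1⁻¹))) ((⇑ψ '' ↑(Stmt17Aux.E1)) ×ˢ (⇑ψ '' ↑(Stmt17Aux.E2))) :=
    hdisj _ _ _ _ (Or.inl (by decide))
  have d24 : Disjoint ((⇑ψ '' ↑(Stmt17Aux.E3 ∪ Stmt17Aux.E3⁻¹)) ×ˢ (⇑ψ '' ↑(Stmt17Aux.E1 ∪ Stmt17Aux.E1⁻¹))) ((⇑ψ '' ↑(Stmt17Aux.E2)) ×ˢ (⇑ψ '' ↑(Stmt17Aux.E1))) :=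
    hdisj _ _ _ _ (Or.inl (by decide))
  have d25 : Disjoint ((⇑ψ '' ↑(Stmt17Aux.E3 ∪ Stmt17Aux.E3⁻¹)) ×ˢ (⇑ψ '' ↑(Stmt17Aux.E1 ∪ Stmt17Aux.E1⁻¹))) ((⇑ψ '' ↑(Stmt17Aux.E1⁻¹)) ×ˢ (⇑ψ '' ↑(Stmt17Aux.E4))) :=
    hdisj _ _ _ _ (Or.inl (by decide))
  have d26 : Disjoint ((⇑ψ '' ↑(Stmt17Aux.E3 ∪ Stmt17Aux.E3⁻¹)) ×ˢ (⇑ψ '' ↑(Stmt17Aux.E1 ∪ Stmt17Aux.E1⁻¹))) ((⇑ψ '' ↑(Stmt17Aux.E4)) ×ˢ (⇑ψ '' ↑(Stmt17Aux.E1⁻¹))) :=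
    hdisj _ _ _ _ (Or.inl (by decide))
  have d34 : Disjoint ((⇑ψ '' ↑(Stmt17Aux.E1)) ×ˢ (⇑ψ '' ↑(Stmt17Aux.E2))) ((⇑ψ '' ↑(Stmt17Aux.E2)) ×ˢ (⇑ψ '' ↑(Stmt17Aux.E1))) :=
    hdisj _ _ _ _ (Or.inl (by decide))
  have d35 : Disjoint ((⇑ψ '' ↑(Stmt17Aux.E1)) ×ˢ (⇑ψ '' ↑(Stmt17Aux.E2))) ((⇑ψ '' ↑(Stmt17Aux.E1⁻¹)) ×ˢ (⇑ψ '' ↑(Stmt17Aux.E4))) :=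
    hdisj _ _ _ _ (Or.inl (by decide))
  have d36 : Disjoint ((⇑ψ '' ↑(Stmt17Aux.E1)) ×ˢ (⇑ψ '' ↑(Stmt17Aux.E2))) ((⇑ψ '' ↑(Stmt17Aux.E4)) ×ˢ (⇑ψ '' ↑(Stmt17Aux.E1⁻¹))) :=
    hdisj _ _ _ _ (Or.inr (by decide))
  have d45 : Disjoint ((⇑ψ '' ↑(Stmt17Aux.E2)) ×ˢ (⇑ψ '' ↑(Stmt17Aux.E1))) ((⇑ψ '' ↑(Stmt17Aux.E1⁻¹)) ×ˢ (⇑ψ '' ↑(Stmt17Aux.E4))) :=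
    hdisj _ _ _ _ (Or.inr (by decide))
  have d46 : Disjoint ((⇑ψ '' ↑(Stmt17Aux.E2)) ×ˢ (⇑ψ '' ↑(Stmt17Aux.E1))) ((⇑ψ '' ↑(Stmt17Aux.E4)) ×ˢ (⇑ψ '' ↑(Stmt17Aux.E1⁻¹))) :=
    hdisj _ _ _ _ (Or.inl (by decide))
  have d56 : Disjoint ((⇑ψ '' ↑(Stmt17Aux.E1⁻¹)) ×ˢ (⇑ψ '' ↑(Stmt17Aux.E4))) ((⇑ψ '' ↑(Stmt17Aux.E4)) ×ˢ (⇑ψ '' ↑(Stmt17Aux.E1⁻¹))) :=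
    hdisj _ _ _ _ (Or.inl (by decide))
  constructor
  · rw [t1, t2, t3, t4, t5, t6]
    refine List.Pairwise.cons ?_ (List.Pairwise.cons ?_ (List.Pairwise.cons ?_
      (List.Pairwise.cons ?_ (List.Pairwise.cons ?_ (List.pairwise_singleton _ _)))))
    · intro s hs
      simp only [List.mem_cons, List.mem_singleton, List.not_mem_nil, or_false] at hs
      rcases hs with rfl | rfl | rfl | rfl | rfl
      exacts [d12, d13, d14, d15, d16]
    · intro s hs
      simp only [List.mem_cons, List.mem_singleton, List.not_mem_nil, or_false] at hs
      rcases hs with rfl | rfl | rfl | rfl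
      exacts [d23, d24, d25, d26]
    · intro s hs
      simp only [List.mem_cons, List.mem_singleton, List.not_mem_nil, or_false] at hs
      rcases hs with rfl | rfl | rfl
      exacts [d34, d35, d36]
    · intro s hs
      simp only [List.mem_cons, List.mem_singleton, List.not_mem_nil, or_false] at hs
      rcases hs with rfl | rfl
      exacts [d45, d46]
    · intro s hs
      simp only [List.mem_singleton, List.mem_cons, List.not_mem_nil, or_false] at hs
      rcases hs with rfl
      exact d56
  · rw [t1, t2, t3, t4, t5, t6]
    rw [Set.ncard_union_eq
        (Set.disjoint_union_left.mpr ⟨Set.disjoint_union_left.mpr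
          ⟨Set.disjoint_union_left.mpr ⟨Set.disjoint_union_left.mpr ⟨d16, d26⟩, d36⟩, d46⟩, d56⟩)
        (((((hfin _ _).union (hfin _ _)).union (hfin _ _)).union (hfin _ _)).union (hfin _ _))
        (hfin _ _),
      Set.ncard_union_eq
        (Set.disjoint_union_left.mpr ⟨Set.disjoint_union_left.mpr
          ⟨Set.disjoint_union_left.mpr ⟨d15, d25⟩, d35⟩, d45⟩)
        ((((hfin _ _).union (hfin _ _)).union (hfin _ _)).union (hfin _ _)) (hfin _ _),
      Set.ncard_union_eq
        (Set.disjoint_union_left.mpr ⟨Set.disjoint_union_left.mpr ⟨d14, d24⟩, d34⟩)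
        (((hfin _ _).union (hfin _ _)).union (hfin _ _)) (hfin _ _),
      Set.ncard_union_eq (Set.disjoint_union_left.mpr ⟨d13, d23⟩)
        ((hfin _ _).union (hfin _ _)) (hfin _ _),
      Set.ncard_union_eq d12 (hfin _ _) (hfin _ _),
      hcard, hcard, hcard, hcard, hcard, hcard]
    decide
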